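/- Let v ∈ [0,1] and let ρ_W = v·|ψ⁻⟩⟨ψ⁻| + ((1−v)/4)·1₄ be the two-qubit Werner state, where |ψ⁻⟩ = (e_{01} − e_{10})/√2 ∈ ℂ² ⊗ ℂ² is the singlet state (so |ψ⁻⟩⟨ψ⁻| is its rank-one projection, a 4×4 matrix indexed by Fin 2 × Fin 2) and 1₄ is the 4×4 identity matrix. Then I₂(ρ_W) = 2v; consequently the Werner state violates the imaginarity steering inequality, I₂(ρ_W) > √2, if and only if v > 1/√2. -/

import Mathlib

open Matrix Kronecker
open scoped ComplexOrder

/-- Trace norm of a square complex matrix: `Tr[sqrt(Aᴴ A)]`. -/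
noncomputable def traceNorm {n : Type*} [Fintype n] [DecidableEq n]
    (A : Matrix n n ℂ) : ℝ :=
  (((Matrix.posSemidef_conjTranspose_mul_self A).1.eigenvectorUnitary.1 *
      diagonal (((↑) : ℝ → ℂ) ∘ (Real.sqrt ·) ∘ (Matrix.posSemidef_conjTranspose_mul_self A).1.eigenvalues) *
      (star (Matrix.posSemidef_conjTranspose_mul_self A).1.eigenvectorUnitary :
        Matrix n n ℂ)).trace).re

/-- Robustness of imaginarity: `(1/2) ‖ρ - ρᵀ‖₁`. -/
noncomputable def roi {n : Type*} [Fintype n] [DecidableEq n]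
    (ρ : Matrix n n ℂ) : ℝ :=
  (1 / 2) * traceNorm (ρ - ρ.transpose)
def σx : Matrix (Fin 2) (Fin 2) ℂ := !![0, 1; 1, 0]
def σy : Matrix (Fin 2) (Fin 2) ℂ := !![0, -Complex.I; Complex.I, 0]
def σz : Matrix (Fin 2) (Fin 2) ℂ := !![1, 0; 0, -1]
/-- Hadamard matrix (x-basis change). -/
noncomputable def Hm : Matrix (Fin 2) (Fin 2) ℂ :=
  (Real.sqrt 2 : ℂ)⁻¹ • !![1, 1; 1, -1]
/-- Eigenvector matrix of σy (y-basis change). -/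
noncomputable def Vm : Matrix (Fin 2) (Fin 2) ℂ :=
  (Real.sqrt 2 : ℂ)⁻¹ • !![1, 1; Complex.I, -Complex.I]

/-- Robustness of imaginarity in the x-basis. -/
noncomputable def roiX (σ : Matrix (Fin 2) (Fin 2) ℂ) : ℝ := roi (Hm * σ * Hm)
/-- Robustness of imaginarity in the y-basis. -/
noncomputable def roiY (σ : Matrix (Fin 2) (Fin 2) ℂ) : ℝ := roi (Vmᴴ * σ * Vm)
noncomputable def n1 (ρ : Matrix (Fin 2 × Fin 2) (Fin 2 × Fin 2) ℂ) : ℝ :=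
  ((((1 : Matrix (Fin 2) (Fin 2) ℂ) ⊗ₖ σx) * ρ).trace).re
noncomputable def n2 (ρ : Matrix (Fin 2 × Fin 2) (Fin 2 × Fin 2) ℂ) : ℝ :=
  ((((1 : Matrix (Fin 2) (Fin 2) ℂ) ⊗ₖ σy) * ρ).trace).re
noncomputable def t11 (ρ : Matrix (Fin 2 × Fin 2) (Fin 2 × Fin 2) ℂ) : ℝ :=
  (((σx ⊗ₖ σx) * ρ).trace).re
noncomputable def t22 (ρ : Matrix (Fin 2 × Fin 2) (Fin 2 × Fin 2) ℂ) : ℝ :=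
  (((σy ⊗ₖ σy) * ρ).trace).re

/-- The imaginarity steering functional. -/
noncomputable def I2 (ρ : Matrix (Fin 2 × Fin 2) (Fin 2 × Fin 2) ℂ) : ℝ :=
  (1 / 2) * (|n1 ρ - t11 ρ| + |n1 ρ + t11 ρ| + |n2 ρ - t22 ρ| + |n2 ρ + t22 ρ|)

/-- The singlet state `|ψ⁻⟩ = (e₀₁ − e₁₀)/√2` as a vector in `ℂ² ⊗ ℂ²`. -/
noncomputable def singlet : Fin 2 × Fin 2 → ℂ := fun p =>
  if p = ((0 : Fin 2), (1 : Fin 2)) then (Real.sqrt 2 : ℂ)⁻¹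
  else if p = ((1 : Fin 2), (0 : Fin 2)) then -(Real.sqrt 2 : ℂ)⁻¹
  else 0

/-- The two-qubit Werner state `v·|ψ⁻⟩⟨ψ⁻| + ((1−v)/4)·𝟙₄`. -/
noncomputable def werner (v : ℝ) : Matrix (Fin 2 × Fin 2) (Fin 2 × Fin 2) ℂ :=
  (v : ℂ) • Matrix.vecMulVec singlet (star singlet)
    + (((1 - v) / 4 : ℝ) : ℂ) • (1 : Matrix (Fin 2 × Fin 2) (Fin 2 × Fin 2) ℂ)

/-! The singlet is a common eigenvector, with eigenvalue `-1`, of `σx ⊗ σx` and `σy ⊗ σy`, and its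
one-qubit marginals are maximally mixed, so `⟨ψ⁻| 1 ⊗ σ |ψ⁻⟩ = 0` for traceless `σ`. Since the Paulis
are traceless, the white-noise part of `ρ_W` contributes nothing, whence `n₁ = n₂ = 0` and
`t₁₁ = t₂₂ = -v`, giving `I₂(ρ_W) = 2v`. -/

lemma trace_σx : σx.trace = 0 := by
  simp [σx, Matrix.trace, Fin.sum_univ_two]

lemma trace_σy : σy.trace = 0 := by
  simp [σy, Matrix.trace, Fin.sum_univ_two]

lemma inv_sqrt_two_mul_self : (√2 : ℂ)⁻¹ * (√2 : ℂ)⁻¹ = 1 / 2 := by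
  rw [← mul_inv, ← Complex.ofReal_mul, Real.mul_self_sqrt zero_le_two]
  norm_num

lemma singlet_dotProduct_star_singlet : singlet ⬝ᵥ star singlet = 1 := by
  norm_num [singlet, dotProduct, Fintype.sum_prod_type, Fin.sum_univ_two, inv_sqrt_two_mul_self]

lemma kronecker_σx_mulVec_singlet : (σx ⊗ₖ σx) *ᵥ singlet = -singlet := by
  ext ⟨i, j⟩
  fin_cases i <;> fin_cases j <;>
    simp [σx, singlet, mulVec, dotProduct, Fintype.sum_prod_type, Fin.sum_univ_two]

lemma kronecker_σy_mulVec_singlet : (σy ⊗ₖ σy) *ᵥ singlet = -singlet := by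
  ext ⟨i, j⟩
  fin_cases i <;> fin_cases j <;>
    simp [σy, singlet, mulVec, dotProduct, Fintype.sum_prod_type, Fin.sum_univ_two]

lemma one_kronecker_σx_singlet_expectation :
    ((1 : Matrix (Fin 2) (Fin 2) ℂ) ⊗ₖ σx) *ᵥ singlet ⬝ᵥ star singlet = 0 := by
  simp [σx, singlet, mulVec, dotProduct, Fintype.sum_prod_type, Fin.sum_univ_two, one_apply]

lemma one_kronecker_σy_singlet_expectation :
    ((1 : Matrix (Fin 2) (Fin 2) ℂ) ⊗ₖ σy) *ᵥ singlet ⬝ᵥ star singlet = 0 := by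
  simp [σy, singlet, mulVec, dotProduct, Fintype.sum_prod_type, Fin.sum_univ_two, one_apply]

lemma trace_mul_werner (M : Matrix (Fin 2 × Fin 2) (Fin 2 × Fin 2) ℂ) (v : ℝ) :
    (M * werner v).trace = v * (M *ᵥ singlet ⬝ᵥ star singlet) + ((1 - v) / 4 : ℝ) * M.trace := by
  simp [werner, mul_add, trace_add, mul_vecMulVec, trace_vecMulVec]

lemma sqrt_two_lt_two_mul_iff (v : ℝ) : √2 < 2 * v ↔ 1 / √2 < v := by
  have : 1 / √2 = √2 / 2 := by field_simp; simp
  rw [this, div_lt_iff₀ two_pos, mul_comm]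

theorem stmt15_general (v : ℝ) (hv0 : 0 ≤ v) :
    I2 (werner v) = 2 * v ∧ (Real.sqrt 2 < I2 (werner v) ↔ 1 / Real.sqrt 2 < v) := by
  have hn1 : n1 (werner v) = 0 := by
    simp [n1, trace_mul_werner, one_kronecker_σx_singlet_expectation, trace_kronecker, trace_σx]
  have hn2 : n2 (werner v) = 0 := by
    simp [n2, trace_mul_werner, one_kronecker_σy_singlet_expectation, trace_kronecker, trace_σy]
  have ht11 : t11 (werner v) = -v := by
    simp [t11, trace_mul_werner, kronecker_σx_mulVec_singlet, singlet_dotProduct_star_singlet,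
      trace_kronecker, trace_σx]
  have ht22 : t22 (werner v) = -v := by
    simp [t22, trace_mul_werner, kronecker_σy_mulVec_singlet, singlet_dotProduct_star_singlet,
      trace_kronecker, trace_σy]
  have hI : I2 (werner v) = 2 * v := by
    rw [I2, hn1, hn2, ht11, ht22, zero_sub, zero_add, abs_neg, abs_neg, abs_of_nonneg hv0]
    ring
  exact ⟨hI, hI ▸ sqrt_two_lt_two_mul_iff v⟩

/-- the Werner state satisfies `I₂(ρ_W) = 2v`, so it violates the
imaginarity steering inequality iff `v > 1/√2`. -/
theorem stmt15 (v : ℝ) (hv0 : 0 ≤ v) (hv1 : v ≤ 1) :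
    I2 (werner v) = 2 * v ∧ (Real.sqrt 2 < I2 (werner v) ↔ 1 / Real.sqrt 2 < v) :=
  stmt15_general v hv0
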